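/- Let H = L²(D, μ) where D is the closed upper half unit disk in ℂ and dμ = s^m dA with s = Im ζ and m ≥ 2 a fixed integer. Define u_k(ζ) = √(8k+2) ζ^{4k}. Then (u_k) is a bounded sequence in L²(D, dA), the sequence (s^{-1} u_k) is bounded in L²(D, s^m dA) provided m ≥ 2, and ‖u_k - u_j‖²_{L²(D, s^m dA)} ≥ (√2/4)^m · π/8 for k ≠ j. -/

import Mathlib

/-!
Everything is computed in polar coordinates `ζ = r e^{iθ}`, in which the half disk is the
rectangle `(0, 1] × [0, π)` and `|u_k|² r = (8k + 2) r^{8k+1}`; this gives `‖u_k‖²_{L²(D)} = π`.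
Since `0 ≤ s ≤ 1` and `m ≥ 2`, `|u_k / s|² s^m ≤ |u_k|²` pointwise. For the separation, restrict
to the sector `1/2 < r ≤ 1`, `π/4 ≤ θ ≤ 3π/4`, where `s = r sin θ ≥ √2/4`; there the cross term
of `|u_k - u_j|²` is a multiple of `cos (4(k - j)θ)`, whose integral over an interval of length
`π/2` vanishes, so the weighted separation is at least `(√2/4)^m` times the sum of the two
sector norms, each of which is at least `3π/8`.
-/

open MeasureTheory Complex Real

/-- The closed upper half unit disk `D = {ζ ∈ ℂ : |ζ| ≤ 1, Im ζ ≥ 0}`. -/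
def upperHalfDisk : Set ℂ := {ζ : ℂ | ‖ζ‖ ≤ 1 ∧ 0 ≤ ζ.im}

/-- `u_k(ζ) = √(8k+2) ζ^{4k}`. -/
noncomputable def useq (k : ℕ) (ζ : ℂ) : ℂ :=
  (Real.sqrt (8*k + 2) : ℂ) * ζ ^ (4*k)

open Set

@[fun_prop]
theorem Complex.continuous_polarCoord_symm : Continuous Complex.polarCoord.symm := by
  simp only [funext Complex.polarCoord_symm_apply]
  fun_prop

theorem Complex.polarCoord_symm_im (p : ℝ × ℝ) :
    (Complex.polarCoord.symm p).im = p.1 * Real.sin p.2 := by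
  simp [Complex.sin_ofReal_re]

theorem Complex.setIntegral_comp_polarCoord_symm {E : Type*} [NormedAddCommGroup E]
    [NormedSpace ℝ E] (f : ℂ → E) {s : Set ℂ} (hs : MeasurableSet s) :
    ∫ p in Complex.polarCoord.symm ⁻¹' s ∩ polarCoord.target,
        p.1 • f (Complex.polarCoord.symm p) = ∫ z in s, f z := by
  rw [← integral_indicator hs, ← Complex.integral_comp_polarCoord_symm, inter_comm,
    ← setIntegral_indicator (hs.preimage Complex.continuous_polarCoord_symm.measurable)]
  congr 1 with p
  by_cases hp : p ∈ Complex.polarCoord.symm ⁻¹' s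
  · rw [indicator_of_mem hp, indicator_of_mem (mem_preimage.1 hp)]
  · rw [indicator_of_notMem hp, indicator_of_notMem (mt mem_preimage.2 hp), smul_zero]

theorem Complex.sq_norm_ofReal_mul_exp_sub (a b x y : ℝ) :
    ‖(a : ℂ) * exp (x * I) - b * exp (y * I)‖ ^ 2 =
      a ^ 2 + b ^ 2 - 2 * a * b * Real.cos (x - y) := by
  rw [Complex.sq_norm, normSq_apply, Real.cos_sub]
  simp only [sub_re, sub_im, re_ofReal_mul, im_ofReal_mul, exp_ofReal_mul_I_re,
    exp_ofReal_mul_I_im]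
  linear_combination a ^ 2 * Real.sin_sq_add_cos_sq x + b ^ 2 * Real.sin_sq_add_cos_sq y

theorem Real.sqrt_two_div_two_le_sin {θ : ℝ} (h₁ : π / 4 ≤ θ) (h₂ : θ ≤ 3 * π / 4) :
    √2 / 2 ≤ Real.sin θ := by
  rw [← cos_pi_div_four, ← cos_sub_pi_div_two, ← cos_abs (θ - π / 2)]
  apply cos_le_cos_of_nonneg_of_le_pi (abs_nonneg _) (by linarith [pi_pos])
  rw [abs_le]
  constructor <;> linarith

theorem integral_cos_four_int_mul (n : ℤ) (hn : n ≠ 0) :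
    ∫ θ in Icc (π / 4) (3 * π / 4), Real.cos (4 * n * θ) = 0 := by
  have h4n : (4 * n : ℝ) ≠ 0 := by exact_mod_cast mul_ne_zero four_ne_zero hn
  rw [integral_Icc_eq_integral_Ioc, ← intervalIntegral.integral_of_le (by linarith [pi_pos]),
    intervalIntegral.integral_comp_mul_left (fun x => Real.cos x) h4n, integral_cos]
  have h₁ : 4 * n * (3 * π / 4) = (3 * n : ℤ) * π := by push_cast; ring
  have h₂ : 4 * n * (π / 4) = n * π := by ring
  rw [h₁, h₂, Real.sin_int_mul_pi, Real.sin_int_mul_pi, sub_zero, smul_zero]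

theorem sq_norm_div_mul_pow_le (z : ℂ) {s : ℝ} (hs₀ : 0 ≤ s) (hs₁ : s ≤ 1) {m : ℕ}
    (hm : 2 ≤ m) : ‖z / s‖ ^ 2 * s ^ m ≤ ‖z‖ ^ 2 := by
  rcases hs₀.eq_or_lt with rfl | hs
  · simp [zero_pow (by omega : m ≠ 0)]
  calc ‖z / s‖ ^ 2 * s ^ m ≤ ‖z / s‖ ^ 2 * s ^ 2 := by
        gcongr ?_ * ?_
        exact pow_le_pow_of_le_one hs₀ hs₁ hm
    _ = ‖z‖ ^ 2 := by rw [norm_div, norm_real, norm_of_nonneg hs₀]; field_simp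

theorem isCompact_upperHalfDisk : IsCompact upperHalfDisk := by
  refine Metric.isCompact_of_isClosed_isBounded ?_
    (Metric.isBounded_closedBall (x := (0 : ℂ)) (r := 1) |>.subset fun z hz => ?_)
  · exact (isClosed_le continuous_norm continuous_const).inter
      (isClosed_le continuous_const continuous_im)
  · simpa using hz.1

theorem im_le_one_of_mem_upperHalfDisk {ζ : ℂ} (hζ : ζ ∈ upperHalfDisk) : ζ.im ≤ 1 :=
  (le_abs_self _).trans ((abs_im_le_norm ζ).trans hζ.1)

theorem polarCoord_symm_preimage_upperHalfDisk :
    Complex.polarCoord.symm ⁻¹' upperHalfDisk ∩ polarCoord.target = Ioc 0 1 ×ˢ Ico 0 π := by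
  ext ⟨r, θ⟩
  simp only [upperHalfDisk, mem_inter_iff, mem_preimage, mem_ofPred_eq, norm_polarCoord_symm,
    Complex.polarCoord_symm_im, polarCoord_target, mem_prod, mem_Ioi, mem_Ioo, mem_Ioc, mem_Ico]
  constructor
  · rintro ⟨⟨hr1, hs⟩, hr, hθ, hθ'⟩
    rw [abs_of_pos hr] at hr1
    refine ⟨⟨hr, hr1⟩, ?_, hθ'⟩
    by_contra! hneg
    exact (mul_neg_of_pos_of_neg hr (sin_neg_of_neg_of_neg_pi_lt hneg hθ)).not_ge hs
  · rintro ⟨⟨hr, hr1⟩, hθ, hθ'⟩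
    rw [abs_of_pos hr]
    exact ⟨⟨hr1, mul_nonneg hr.le (sin_nonneg_of_nonneg_of_le_pi hθ hθ'.le)⟩, hr,
      by linarith [pi_pos], hθ'⟩

theorem setIntegral_upperHalfDisk_eq_polar (f : ℂ → ℝ) :
    ∫ ζ in upperHalfDisk, f ζ =
      ∫ p in Ioc 0 1 ×ˢ Ico 0 π, p.1 * f (Complex.polarCoord.symm p) := by
  rw [← Complex.setIntegral_comp_polarCoord_symm _
    isCompact_upperHalfDisk.isClosed.measurableSet, polarCoord_symm_preimage_upperHalfDisk]
  rfl

theorem setIntegral_upperHalfDisk_sq_norm_div_im_mul_pow_le {f : ℂ → ℂ}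
    (hf : IntegrableOn (fun ζ => ‖f ζ‖ ^ 2) upperHalfDisk) {m : ℕ} (hm : 2 ≤ m) :
    ∫ ζ in upperHalfDisk, ‖f ζ / (ζ.im : ℂ)‖ ^ 2 * ζ.im ^ m ≤
      ∫ ζ in upperHalfDisk, ‖f ζ‖ ^ 2 := by
  have hD := isCompact_upperHalfDisk.isClosed.measurableSet
  refine integral_mono_of_nonneg (ae_restrict_of_forall_mem hD fun ζ hζ => ?_) hf
    (ae_restrict_of_forall_mem hD fun ζ hζ => ?_)
  · have := hζ.2
    positivity
  · exact sq_norm_div_mul_pow_le _ hζ.2 (im_le_one_of_mem_upperHalfDisk hζ) hm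

def polarSector : Set (ℝ × ℝ) := Ioc (1 / 2) 1 ×ˢ Icc (π / 4) (3 * π / 4)

theorem polarSector_subset : polarSector ⊆ Ioc 0 1 ×ˢ Ico 0 π :=
  prod_mono (Ioc_subset_Ioc_left (by norm_num))
    ((Icc_subset_Ico_iff (by linarith [pi_pos])).2 ⟨by positivity, by linarith [pi_pos]⟩)

theorem measurableSet_polarSector : MeasurableSet polarSector :=
  measurableSet_Ioc.prod measurableSet_Icc

theorem sqrt_two_div_four_le_im_polarCoord_symm {p : ℝ × ℝ} (hp : p ∈ polarSector) :
    √2 / 4 ≤ (Complex.polarCoord.symm p).im := by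
  rw [Complex.polarCoord_symm_im]
  calc √2 / 4 = 1 / 2 * (√2 / 2) := by ring
    _ ≤ p.1 * Real.sin p.2 :=
      mul_le_mul hp.1.1.le (Real.sqrt_two_div_two_le_sin hp.2.1 hp.2.2) (by positivity)
        (by linarith [hp.1.1])

theorem pow_mul_setIntegral_polarSector_le_setIntegral_upperHalfDisk {g : ℂ → ℝ}
    (hg : Continuous g) (hg₀ : ∀ ζ, 0 ≤ g ζ) (m : ℕ) :
    (√2 / 4) ^ m * ∫ p in polarSector, p.1 * g (Complex.polarCoord.symm p) ≤
      ∫ ζ in upperHalfDisk, g ζ * ζ.im ^ m := by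
  have hint : IntegrableOn (fun p => p.1 * (g (Complex.polarCoord.symm p) *
      (Complex.polarCoord.symm p).im ^ m)) (Ioc 0 1 ×ˢ Ico 0 π) :=
    ((Continuous.continuousOn (by fun_prop)).integrableOn_compact
      (isCompact_Icc.prod isCompact_Icc)).mono_set
        (prod_mono Ioc_subset_Icc_self Ico_subset_Icc_self)
  rw [setIntegral_upperHalfDisk_eq_polar, ← integral_const_mul]
  calc ∫ p in polarSector, (√2 / 4) ^ m * (p.1 * g (Complex.polarCoord.symm p))
      ≤ ∫ p in polarSector,
          p.1 * (g (Complex.polarCoord.symm p) * (Complex.polarCoord.symm p).im ^ m) := by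
        refine integral_mono_of_nonneg
          (ae_restrict_of_forall_mem measurableSet_polarSector fun p hp => ?_)
          (hint.mono_set polarSector_subset)
          (ae_restrict_of_forall_mem measurableSet_polarSector fun p hp => ?_)
        · have hr := hp.1.1
          have hg := hg₀ (Complex.polarCoord.symm p)
          positivity
        · have hr := hp.1.1
          have hg := hg₀ (Complex.polarCoord.symm p)
          have him := sqrt_two_div_four_le_im_polarCoord_symm hp
          calc (√2 / 4) ^ m * (p.1 * g (Complex.polarCoord.symm p))
              ≤ (Complex.polarCoord.symm p).im ^ m * (p.1 * g (Complex.polarCoord.symm p)) := by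
                gcongr
            _ = _ := by ring
    _ ≤ ∫ p in Ioc 0 1 ×ˢ Ico 0 π,
          p.1 * (g (Complex.polarCoord.symm p) * (Complex.polarCoord.symm p).im ^ m) := by
        refine setIntegral_mono_set hint
          (ae_restrict_of_forall_mem (measurableSet_Ioc.prod measurableSet_Ico) fun p hp => ?_)
          polarSector_subset.eventuallyLE
        have hD : p ∈ Complex.polarCoord.symm ⁻¹' upperHalfDisk ∩ polarCoord.target :=
          polarCoord_symm_preimage_upperHalfDisk ▸ hp
        exact mul_nonneg hp.1.1.le (mul_nonneg (hg₀ _) (pow_nonneg hD.1.2 m))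

@[fun_prop]
theorem continuous_useq (k : ℕ) : Continuous (useq k) := by
  unfold useq
  fun_prop

theorem useq_polarCoord_symm (k : ℕ) (p : ℝ × ℝ) :
    useq k (Complex.polarCoord.symm p) = ((√(8 * k + 2) * p.1 ^ (4 * k) : ℝ) : ℂ) *
      exp ((4 * k * p.2 : ℝ) * I) := by
  rw [useq, Complex.polarCoord_symm_apply, ofReal_cos, ofReal_sin, ← exp_mul_I, mul_pow,
    ← Complex.exp_nat_mul]
  push_cast
  ring_nf

theorem sq_norm_useq_polarCoord_symm (k : ℕ) (p : ℝ × ℝ) :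
    ‖useq k (Complex.polarCoord.symm p)‖ ^ 2 = (8 * k + 2) * p.1 ^ (8 * k) := by
  rw [useq_polarCoord_symm, norm_mul, norm_exp_ofReal_mul_I, mul_one, norm_real,
    Real.norm_eq_abs, sq_abs, mul_pow, sq_sqrt (by positivity), ← pow_mul]
  ring_nf

theorem sq_norm_useq_sub_polarCoord_symm (k j : ℕ) (p : ℝ × ℝ) :
    ‖useq k (Complex.polarCoord.symm p) - useq j (Complex.polarCoord.symm p)‖ ^ 2 =
      (8 * k + 2) * p.1 ^ (8 * k) + (8 * j + 2) * p.1 ^ (8 * j) -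
        2 * √(8 * k + 2) * √(8 * j + 2) * p.1 ^ (4 * k + 4 * j) *
          Real.cos (4 * ((k - j : ℤ) : ℝ) * p.2) := by
  rw [useq_polarCoord_symm, useq_polarCoord_symm, sq_norm_ofReal_mul_exp_sub, mul_pow, mul_pow,
    sq_sqrt (by positivity), sq_sqrt (by positivity), ← pow_mul, ← pow_mul]
  push_cast
  ring_nf

theorem setIntegral_Ioc_prod_mul_sq_norm_useq (k : ℕ) {a : ℝ} (ha : a ≤ 1) (t : Set ℝ) :
    ∫ p in Ioc a 1 ×ˢ t, p.1 * ‖useq k (Complex.polarCoord.symm p)‖ ^ 2 =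
      (1 - a ^ (8 * k + 2)) * volume.real t := by
  have h : ∀ p : ℝ × ℝ, p.1 * ‖useq k (Complex.polarCoord.symm p)‖ ^ 2 =
      (8 * k + 2) * p.1 ^ (8 * k + 1) * 1 := fun p => by
    rw [sq_norm_useq_polarCoord_symm]
    ring
  simp_rw [h]
  rw [Measure.volume_eq_prod, setIntegral_prod_mul (fun r : ℝ => (8 * k + 2) * r ^ (8 * k + 1))
    (fun _ : ℝ => (1 : ℝ)), setIntegral_const, smul_eq_mul, mul_one,
    ← intervalIntegral.integral_of_le ha, intervalIntegral.integral_const_mul, integral_pow]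
  push_cast
  field_simp
  ring

theorem setIntegral_upperHalfDisk_sq_norm_useq (k : ℕ) :
    ∫ ζ in upperHalfDisk, ‖useq k ζ‖ ^ 2 = π := by
  rw [setIntegral_upperHalfDisk_eq_polar, setIntegral_Ioc_prod_mul_sq_norm_useq _ zero_le_one,
    Real.volume_real_Ico_of_le pi_pos.le]
  simp

theorem pi_div_eight_le_setIntegral_polarSector_sq_norm_useq_sub {k j : ℕ} (hkj : k ≠ j) :
    π / 8 ≤ ∫ p in polarSector,
      p.1 * ‖useq k (Complex.polarCoord.symm p) - useq j (Complex.polarCoord.symm p)‖ ^ 2 := by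
  have hint : ∀ f : ℝ × ℝ → ℝ, Continuous f → IntegrableOn f polarSector := fun f hf =>
    (hf.continuousOn.integrableOn_compact (isCompact_Icc.prod isCompact_Icc)).mono_set
      (prod_mono Ioc_subset_Icc_self subset_rfl)
  have hu : ∀ n, Continuous fun p : ℝ × ℝ => p.1 * ‖useq n (Complex.polarCoord.symm p)‖ ^ 2 :=
    fun n => by fun_prop
  set c : ℝ := 2 * √(8 * k + 2) * √(8 * j + 2)
  have hcross : ∫ p in polarSector,
      c * p.1 ^ (4 * k + 4 * j + 1) * Real.cos (4 * ((k - j : ℤ) : ℝ) * p.2) = 0 := by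
    rw [polarSector, Measure.volume_eq_prod,
      setIntegral_prod_mul (fun r : ℝ => c * r ^ (4 * k + 4 * j + 1))
        (fun θ => Real.cos (4 * ((k - j : ℤ) : ℝ) * θ)),
      integral_cos_four_int_mul _ (sub_ne_zero.2 (by exact_mod_cast hkj)), mul_zero]
  have hsplit : ∀ p : ℝ × ℝ,
      p.1 * ‖useq k (Complex.polarCoord.symm p) - useq j (Complex.polarCoord.symm p)‖ ^ 2 =
        p.1 * ‖useq k (Complex.polarCoord.symm p)‖ ^ 2 +
          p.1 * ‖useq j (Complex.polarCoord.symm p)‖ ^ 2 -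
            c * p.1 ^ (4 * k + 4 * j + 1) * Real.cos (4 * ((k - j : ℤ) : ℝ) * p.2) := fun p => by
    rw [sq_norm_useq_sub_polarCoord_symm, sq_norm_useq_polarCoord_symm,
      sq_norm_useq_polarCoord_symm]
    ring
  simp_rw [hsplit]
  have hk := hint _ (hu k)
  have hj := hint _ (hu j)
  rw [integral_sub (hk.fun_add hj) (hint _ (by fun_prop)), integral_add hk hj, hcross,
    polarSector, setIntegral_Ioc_prod_mul_sq_norm_useq _ (by norm_num),
    setIntegral_Ioc_prod_mul_sq_norm_useq _ (by norm_num),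
    Real.volume_real_Icc_of_le (by linarith [pi_pos])]
  have hsmall : ∀ n : ℕ, (1 / 2 : ℝ) ^ (8 * n + 2) ≤ 1 / 4 := fun n =>
    (pow_le_pow_of_le_one (by norm_num) (by norm_num) (by omega : 2 ≤ 8 * n + 2)).trans_eq
      (by norm_num)
  nlinarith [hsmall k, hsmall j, pi_pos]

/-- The analytic core of the non-compactness theorem: `(u_k)` is bounded in `L²(D, dA)`,
`(s⁻¹ u_k)` is bounded in the weighted space `L²(D, s^m dA)` for `m ≥ 2`, and the `u_k` are
uniformly separated in `L²(D, s^m dA)`. -/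
theorem analytic_core (m : ℕ) (hm : 2 ≤ m) :
    (∃ B : ℝ, ∀ k : ℕ, ∫ ζ in upperHalfDisk, ‖useq k ζ‖ ^ 2 ∂volume ≤ B) ∧
    (∃ B' : ℝ, ∀ k : ℕ,
      ∫ ζ in upperHalfDisk, ‖useq k ζ / (ζ.im : ℂ)‖ ^ 2 * ζ.im ^ m ∂volume ≤ B') ∧
    (∀ k j : ℕ, k ≠ j →
      (Real.sqrt 2 / 4) ^ m * (π / 8)
        ≤ ∫ ζ in upperHalfDisk, ‖useq k ζ - useq j ζ‖ ^ 2 * ζ.im ^ m ∂volume) := by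
  refine ⟨⟨π, fun k => (setIntegral_upperHalfDisk_sq_norm_useq k).le⟩, ⟨π, fun k => ?_⟩,
    fun k j hkj => ?_⟩
  · have hint : IntegrableOn (fun ζ => ‖useq k ζ‖ ^ 2) upperHalfDisk :=
      (Continuous.continuousOn (by fun_prop)).integrableOn_compact isCompact_upperHalfDisk
    exact (setIntegral_upperHalfDisk_sq_norm_div_im_mul_pow_le hint hm).trans_eq
      (setIntegral_upperHalfDisk_sq_norm_useq k)
  · calc (√2 / 4) ^ m * (π / 8)
        ≤ (√2 / 4) ^ m * ∫ p in polarSector, p.1 *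
            ‖useq k (Complex.polarCoord.symm p) - useq j (Complex.polarCoord.symm p)‖ ^ 2 := by
          gcongr
          exact pi_div_eight_le_setIntegral_polarSector_sq_norm_useq_sub hkj
      _ ≤ _ := pow_mul_setIntegral_polarSector_le_setIntegral_upperHalfDisk
          (g := fun ζ => ‖useq k ζ - useq j ζ‖ ^ 2) (by fun_prop) (fun _ => sq_nonneg _) m
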